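/- arXiv:1704.08926 — 2 statements merged into one kernel-verified Lean document; each statement's English description precedes it below -/
import Mathlib

section
/- Let Λ, A, B be closed subsets of E, let S be nonempty with x̄ ∈ S ⊆ A ∩ B ∩ Λ, let n ≥ 1 be an integer, c ∈ [0,1), and ρ > 0. Suppose that for every alternating projections sequence (x_k),(b_k) for (A,B) with x₀ ∈ A ∩ B_ρ(x̄) ∩ Λ there exists j ∈ {0,1,…,n−1} such that x_{j+nk} ∈ Λ for all k ∈ ℕ and dist(x_{j+n(k+1)}, S) ≤ c·dist(x_{j+nk}, S) for all k ∈ ℕ. Then dist(x, A ∩ B ∩ Λ) ≤ κ·dist(x, B) for all x ∈ A ∩ B_ρ(x̄) ∩ Λ, where κ = 2(2n² − 1 − c(n−1))/(1−c); in particular the collection {A,B} is subtransversal at x̄ relative to Λ. -/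
/-!
Run the alternating projections from `x`. Distances to `B` do not increase along the
sequence, so every step moves by at most `2 dist(x, B)`. At the index `j` supplied by the
hypothesis, `dist(x_{j+n}, S) ≤ c dist(x_j, S)` and the triangle inequality give
`(1 - c) dist(x_j, S) ≤ dist(x_j, x_{j+n}) ≤ 2n dist(x, B)`, while
`dist(x, S) ≤ dist(x_j, S) + 2j dist(x, B)`. Since `S ⊆ A ∩ B ∩ Λ` and `j ≤ n - 1`, this bounds
`dist(x, A ∩ B ∩ Λ)` by `(2n + 2(n - 1)(1 - c)) / (1 - c) · dist(x, B)`, and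
`2n + 2(n - 1)(1 - c) ≤ 2(2n² - 1 - c(n - 1))`.
-/

/-- The (set-valued) projector onto a set `A`. -/
def projSet {E : Type*} [NormedAddCommGroup E] (A : Set E) (x : E) : Set E :=
  {a | a ∈ A ∧ ‖x - a‖ = Metric.infDist x A}

open Metric

theorem dist_le_mul_of_dist_succ_le {α : Type*} [PseudoMetricSpace α] {f : ℕ → α} {C : ℝ}
    (h : ∀ k, dist (f k) (f (k + 1)) ≤ C) (a m : ℕ) : dist (f a) (f (a + m)) ≤ m * C := by
  simpa using
    dist_le_Ico_sum_of_dist_le (Nat.le_add_right a m) (d := fun _ => C) fun {k} _ _ => h k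

theorem one_sub_mul_infDist_le_dist {α : Type*} [PseudoMetricSpace α] {S : Set α} {y z : α}
    {c : ℝ} (h : infDist z S ≤ c * infDist y S) : (1 - c) * infDist y S ≤ dist y z := by
  linarith [infDist_le_infDist_add_dist (x := y) (y := z) (s := S)]

section projSet

variable {E : Type*} [NormedAddCommGroup E] {A B : Set E}

theorem exists_mem_projSet [ProperSpace E] (hA : IsClosed A) (hne : A.Nonempty) (x : E) :
    ∃ a, a ∈ projSet A x := by
  obtain ⟨a, ha, hdist⟩ := hA.exists_infDist_eq_dist hne x
  exact ⟨a, ha, by rw [← dist_eq_norm, hdist]⟩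

theorem dist_eq_infDist_of_mem_projSet {x a : E} (h : a ∈ projSet A x) :
    dist x a = infDist x A := by
  rw [dist_eq_norm]; exact h.2

def IsAltProjSeq (A B : Set E) (x b : ℕ → E) : Prop :=
  (∀ k, b k ∈ projSet B (x k)) ∧ ∀ k, x (k + 1) ∈ projSet A (b k)

theorem exists_isAltProjSeq [ProperSpace E] (hA : IsClosed A) (hB : IsClosed B)
    (hAne : A.Nonempty) (hBne : B.Nonempty) (x₀ : E) :
    ∃ x b, x 0 = x₀ ∧ IsAltProjSeq A B x b := by
  choose p hp using exists_mem_projSet hB hBne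
  choose q hq using exists_mem_projSet hA hAne
  refine ⟨fun k => (q ∘ p)^[k] x₀, fun k => p ((q ∘ p)^[k] x₀), rfl, fun k => hp _, fun k => ?_⟩
  simp only [Function.iterate_succ_apply']
  exact hq _

namespace IsAltProjSeq

variable {x b : ℕ → E}

theorem mem_left (h : IsAltProjSeq A B x b) (h0 : x 0 ∈ A) (k : ℕ) : x k ∈ A := by
  cases k with
  | zero => exact h0
  | succ k => exact (h.2 k).1

theorem dist_succ_le_infDist (h : IsAltProjSeq A B x b) (h0 : x 0 ∈ A) (k : ℕ) :
    dist (b k) (x (k + 1)) ≤ infDist (x k) B :=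
  calc dist (b k) (x (k + 1)) = infDist (b k) A := dist_eq_infDist_of_mem_projSet (h.2 k)
    _ ≤ dist (b k) (x k) := infDist_le_dist_of_mem (h.mem_left h0 k)
    _ = infDist (x k) B := by rw [dist_comm, dist_eq_infDist_of_mem_projSet (h.1 k)]

theorem infDist_succ_le (h : IsAltProjSeq A B x b) (h0 : x 0 ∈ A) (k : ℕ) :
    infDist (x (k + 1)) B ≤ infDist (x k) B :=
  (infDist_le_dist_of_mem (h.1 k).1).trans <|
    (dist_comm _ _).trans_le (h.dist_succ_le_infDist h0 k)

theorem infDist_le_infDist_zero (h : IsAltProjSeq A B x b) (h0 : x 0 ∈ A) (k : ℕ) :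
    infDist (x k) B ≤ infDist (x 0) B :=
  antitone_nat_of_succ_le (f := fun k => infDist (x k) B) (h.infDist_succ_le h0) k.zero_le

theorem dist_succ_le_two_mul_infDist (h : IsAltProjSeq A B x b) (h0 : x 0 ∈ A) (k : ℕ) :
    dist (x k) (x (k + 1)) ≤ 2 * infDist (x 0) B :=
  calc dist (x k) (x (k + 1)) ≤ dist (x k) (b k) + dist (b k) (x (k + 1)) := dist_triangle _ _ _
    _ ≤ infDist (x k) B + infDist (x k) B :=
      add_le_add (dist_eq_infDist_of_mem_projSet (h.1 k)).le (h.dist_succ_le_infDist h0 k)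
    _ ≤ 2 * infDist (x 0) B := by linarith [h.infDist_le_infDist_zero h0 k]

end IsAltProjSeq

end projSet

theorem subtransversality_necessary_for_linear_monotonicity_of_subsequences_general
    {E : Type*} [NormedAddCommGroup E] [InnerProductSpace ℝ E] [FiniteDimensional ℝ E]
    (Λ A B S : Set E) (hA : IsClosed A) (hB : IsClosed B)
    (xbar : E) (hxbarS : xbar ∈ S) (hS : S ⊆ A ∩ B ∩ Λ)
    (n : ℕ) (c ρ : ℝ) (hc1 : c < 1)
    (hyp : ∀ x b : ℕ → E,
      (∀ k, b k ∈ projSet B (x k)) → (∀ k, x (k + 1) ∈ projSet A (b k)) →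
      x 0 ∈ A ∩ Metric.ball xbar ρ ∩ Λ →
      ∃ j < n, (∀ k, x (j + n * k) ∈ Λ) ∧
        ∀ k, Metric.infDist (x (j + n * (k + 1))) S ≤ c * Metric.infDist (x (j + n * k)) S) :
    ∀ x ∈ A ∩ Metric.ball xbar ρ ∩ Λ,
      Metric.infDist x (A ∩ B ∩ Λ) ≤
        (2 * (2 * (n : ℝ) ^ 2 - 1 - c * ((n : ℝ) - 1)) / (1 - c)) * Metric.infDist x B := by
  intro x₀ hx₀
  obtain ⟨x, b, rfl, hseq⟩ :=
    exists_isAltProjSeq hA hB ⟨_, hx₀.1.1⟩ ⟨xbar, (hS hxbarS).1.2⟩ x₀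
  have hstep := hseq.dist_succ_le_two_mul_infDist hx₀.1.1
  obtain ⟨j, hjn, -, hcontr⟩ := hyp x b hseq.1 hseq.2 hx₀
  have hxj : (1 - c) * infDist (x j) S ≤ n * (2 * infDist (x 0) B) :=
    (one_sub_mul_infDist_le_dist (by simpa using hcontr 0)).trans
      (dist_le_mul_of_dist_succ_le hstep j n)
  have hx0 : infDist (x 0) (A ∩ B ∩ Λ) ≤ infDist (x j) S + j * (2 * infDist (x 0) B) :=
    calc infDist (x 0) (A ∩ B ∩ Λ) ≤ infDist (x 0) S :=
          infDist_le_infDist_of_subset hS ⟨xbar, hxbarS⟩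
      _ ≤ infDist (x j) S + dist (x 0) (x j) := infDist_le_infDist_add_dist
      _ ≤ infDist (x j) S + j * (2 * infDist (x 0) B) := by
          simpa using dist_le_mul_of_dist_succ_le hstep 0 j
  have hjn' : (j : ℝ) + 1 ≤ n := by exact_mod_cast hjn
  have hc : 0 < 1 - c := sub_pos.2 hc1
  have hd : 0 ≤ infDist (x 0) B := infDist_nonneg
  rw [div_mul_eq_mul_div, le_div_iff₀ hc]
  linarith [mul_le_mul_of_nonneg_left hx0 hc.le,
    mul_nonneg (mul_nonneg hc.le hd) (by linarith : (0 : ℝ) ≤ n - 1 - j),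
    mul_nonneg hd (by nlinarith : (0 : ℝ) ≤ n * (n - 1))]

/-- If every alternating projections sequence for `(A,B)` starting in
`A ∩ B_ρ(xbar) ∩ Λ` has a subsequence `(x_{j+nk})_k` remaining in `Λ` and linearly monotone
with respect to `S` with constant `c`, then `dist(x, A ∩ B ∩ Λ) ≤ κ·dist(x, B)` on
`A ∩ B_ρ(xbar) ∩ Λ` with `κ = 2(2n² − 1 − c(n−1))/(1−c)`; in particular `{A,B}` is
subtransversal at `xbar` relative to `Λ`. -/
theorem subtransversality_necessary_for_linear_monotonicity_of_subsequences
    {E : Type*} [NormedAddCommGroup E] [InnerProductSpace ℝ E] [FiniteDimensional ℝ E]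
    (Λ A B S : Set E) (hΛ : IsClosed Λ) (hA : IsClosed A) (hB : IsClosed B)
    (xbar : E) (hxbarS : xbar ∈ S) (hS : S ⊆ A ∩ B ∩ Λ)
    (n : ℕ) (hn : 1 ≤ n) (c ρ : ℝ) (hc0 : 0 ≤ c) (hc1 : c < 1) (hρ : 0 < ρ)
    (hyp : ∀ x b : ℕ → E,
      (∀ k, b k ∈ projSet B (x k)) → (∀ k, x (k + 1) ∈ projSet A (b k)) →
      x 0 ∈ A ∩ Metric.ball xbar ρ ∩ Λ →
      ∃ j < n, (∀ k, x (j + n * k) ∈ Λ) ∧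
        ∀ k, Metric.infDist (x (j + n * (k + 1))) S ≤ c * Metric.infDist (x (j + n * k)) S) :
    ∀ x ∈ A ∩ Metric.ball xbar ρ ∩ Λ,
      Metric.infDist x (A ∩ B ∩ Λ) ≤
        (2 * (2 * (n : ℝ) ^ 2 - 1 - c * ((n : ℝ) - 1)) / (1 - c)) * Metric.infDist x B :=
  subtransversality_necessary_for_linear_monotonicity_of_subsequences_general Λ A B S hA hB xbar
    hxbarS hS n c ρ hc1 hyp
end

section
/- Let Λ, A, B be closed subsets of E, let x̄ ∈ A ∩ B ∩ Λ, let n ≥ 1 be an integer, c ∈ [0,1), and ρ > 0. Suppose that for every alternating projections sequence (x_k),(b_k) for (A,B) with x₀ ∈ A ∩ B_ρ(x̄) ∩ Λ, with joining sequence (z_k) defined by z_{2k} = x_k and z_{2k+1} = b_k, there exists j ∈ {0,1,…,n−1} such that: z_{2j+k} ∈ Λ for all k ∈ ℕ, ‖z_{2j+k+2} − z_{2j+k+1}‖ ≤ ‖z_{2j+k+1} − z_{2j+k}‖ for all k ∈ ℕ, and ‖z_{2j+2n(k+1)+1} − z_{2j+2n(k+1)}‖ ≤ c‖z_{2j+2nk+1}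 − z_{2j+2nk}‖ for all k ∈ ℕ (i.e. the shifted joining sequence is a linear extension of the subsequence (x_{j+nk})_k on Λ with frequency 2n and rate c). Then dist(x, A ∩ B ∩ Λ) ≤ κ·dist(x, B) for all x ∈ A ∩ B_ρ(x̄) ∩ Λ, where κ = 2(2n − 1 − c(n−1))/(1−c); in particular {A,B} is subtransversal at x̄ relative to Λ. -/
/-!
Start the alternating projections at `x` and let `(z_m)` be its joining sequence. Each
projection step is at most as long as the previous one, and by hypothesis the step length
contracts by `c` every `2n` steps from the index `2j` on. The total length of the path is
therefore at most `(2j + 2n / (1 - c)) · ‖z₁ - z₀‖`, so `(z_m)` converges, and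
`‖z₁ - z₀‖ = dist(x, B)`. The limit lies in `A ∩ B`, being the limit of `z_{2k} ∈ A` and
of `z_{2k+1} ∈ B`, and in `Λ` because the tail of `(z_m)` does; since `j ≤ n - 1`, its
distance to `x` is at most `κ · dist(x, B)`.
-/

open Filter Finset Topology Metric

section PeriodicContraction

variable {e : ℕ → ℝ} {c : ℝ} {s p : ℕ}

theorem le_pow_mul_of_periodic_contraction (hc0 : 0 ≤ c)
    (h : ∀ k, e (s + p * (k + 1)) ≤ c * e (s + p * k)) (k : ℕ) :
    e (s + p * k) ≤ c ^ k * e s := by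
  induction k with
  | zero => simp
  | succ k ih =>
    calc e (s + p * (k + 1)) ≤ c * e (s + p * k) := h k
      _ ≤ c * (c ^ k * e s) := by gcongr
      _ = c ^ (k + 1) * e s := by ring

theorem Antitone.sum_range_add_mul_le_of_periodic_contraction (he : Antitone e) (hc0 : 0 ≤ c)
    (h : ∀ k, e (s + p * (k + 1)) ≤ c * e (s + p * k)) (N : ℕ) :
    ∑ m ∈ range (s + p * N), e m ≤ (s + p * ∑ k ∈ range N, c ^ k) * e 0 := by
  induction N with
  | zero =>
    simpa using sum_le_card_nsmul (range s) e (e 0) fun m _ => he (Nat.zero_le m)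
  | succ N ih =>
    have hblock : ∑ i ∈ range p, e (s + p * N + i) ≤ p * (c ^ N * e 0) := by
      have hterm : ∀ i ∈ range p, e (s + p * N + i) ≤ c ^ N * e 0 := fun i _ =>
        calc e (s + p * N + i) ≤ e (s + p * N) := he (Nat.le_add_right _ _)
          _ ≤ c ^ N * e s := le_pow_mul_of_periodic_contraction hc0 h N
          _ ≤ c ^ N * e 0 := by gcongr; exact he (Nat.zero_le s)
      simpa using sum_le_card_nsmul _ _ _ hterm
    rw [mul_add_one, ← add_assoc, sum_range_add, sum_range_succ]
    linarith

theorem Antitone.sum_range_le_of_periodic_contraction (he : Antitone e) (he0 : ∀ m, 0 ≤ e m)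
    (hc0 : 0 ≤ c) (hc1 : c < 1) (hp : 0 < p)
    (h : ∀ k, e (s + p * (k + 1)) ≤ c * e (s + p * k)) (N : ℕ) :
    ∑ m ∈ range N, e m ≤ (s + p / (1 - c)) * e 0 := by
  have hN : N ≤ s + p * N := le_add_left (Nat.le_mul_of_pos_left N hp)
  have hgeom : ∑ k ∈ range N, c ^ k ≤ 1 / (1 - c) := by
    have := geom_sum_Ico_le_of_lt_one (m := 0) (n := N) hc0 hc1
    rwa [← range_eq_Ico, pow_zero] at this
  calc ∑ m ∈ range N, e m ≤ ∑ m ∈ range (s + p * N), e m :=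
        sum_le_sum_of_subset_of_nonneg (range_subset_range.2 hN) fun m _ _ => he0 m
    _ ≤ (s + p * ∑ k ∈ range N, c ^ k) * e 0 :=
        he.sum_range_add_mul_le_of_periodic_contraction hc0 h N
    _ ≤ (s + p * (1 / (1 - c))) * e 0 := by gcongr; exact he0 0
    _ = (s + p / (1 - c)) * e 0 := by ring

end PeriodicContraction

theorem exists_tendsto_dist_le_of_sum_range_dist_le {α : Type*} [PseudoMetricSpace α]
    [CompleteSpace α] {z : ℕ → α} {K : ℝ}
    (h : ∀ N, ∑ m ∈ range N, dist (z m) (z (m + 1)) ≤ K) :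
    ∃ l, Tendsto z atTop (𝓝 l) ∧ dist (z 0) l ≤ K := by
  have hs := summable_of_sum_range_le (fun _ => dist_nonneg) h
  obtain ⟨l, hl⟩ := cauchySeq_tendsto_of_complete (cauchySeq_of_summable_dist hs)
  exact ⟨l, hl, (dist_le_tsum_of_dist_le_of_tendsto₀ _ (fun _ => le_rfl) hs hl).trans
    (hs.tsum_le_of_sum_range_le h)⟩

section AlternatingProjections

variable {E : Type*} [NormedAddCommGroup E] {A B : Set E}

theorem dist_le_of_mem_projSet {x a y : E} (ha : a ∈ projSet A x) (hy : y ∈ A) :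
    dist x a ≤ dist x y := by
  rw [dist_eq_norm, ha.2]
  exact infDist_le_dist_of_mem hy

theorem projSet_nonempty [ProperSpace E] (hA : IsClosed A) (hne : A.Nonempty) (x : E) :
    (projSet A x).Nonempty := by
  obtain ⟨a, ha, hdist⟩ := hA.exists_infDist_eq_dist hne x
  exact ⟨a, ha, by rw [← dist_eq_norm, hdist]⟩

/-- `z` is the joining sequence of an alternating projections sequence for `(A, B)`:
`x_k = z (2 * k)` and `b_k = z (2 * k + 1)`. -/
def IsAltProjJoining (A B : Set E) (z : ℕ → E) : Prop :=
  ∀ k, z (2 * k + 1) ∈ projSet B (z (2 * k)) ∧ z (2 * k + 2) ∈ projSet A (z (2 * k + 1))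

theorem exists_isAltProjJoining [ProperSpace E] (hA : IsClosed A) (hB : IsClosed B)
    (hAne : A.Nonempty) (hBne : B.Nonempty) (x : E) :
    ∃ z, z 0 = x ∧ IsAltProjJoining A B z := by
  choose pA hpA using projSet_nonempty hA hAne
  choose pB hpB using projSet_nonempty hB hBne
  let z : ℕ → E := fun m => Nat.rec x (fun m y => if Even m then pB y else pA y) m
  refine ⟨z, rfl, fun k => ⟨?_, ?_⟩⟩
  · change (if Even (2 * k) then pB _ else pA _) ∈ _
    rw [if_pos (even_two_mul k)]
    exact hpB _
  · change (if Even (2 * k + 1) then pB _ else pA _) ∈ _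
    rw [if_neg (Nat.not_even_two_mul_add_one k)]
    exact hpA _

namespace IsAltProjJoining

variable {z : ℕ → E}

theorem mem_left (h : IsAltProjJoining A B z) (h0 : z 0 ∈ A) : ∀ k, z (2 * k) ∈ A
  | 0 => h0
  | k + 1 => (h k).2.1

theorem mem_right (h : IsAltProjJoining A B z) (k : ℕ) : z (2 * k + 1) ∈ B :=
  (h k).1.1

theorem antitone_dist_succ (h : IsAltProjJoining A B z) (h0 : z 0 ∈ A) :
    Antitone fun m => dist (z m) (z (m + 1)) := by
  refine antitone_nat_of_succ_le fun m => ?_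
  obtain ⟨k, rfl | rfl⟩ := Nat.even_or_odd' m
  · rw [dist_comm (z (2 * k))]
    exact dist_le_of_mem_projSet (h k).2 (h.mem_left h0 k)
  · rw [dist_comm (z (2 * k + 1))]
    exact dist_le_of_mem_projSet (h (k + 1)).1 (h.mem_right k)

theorem mem_inter_of_tendsto (h : IsAltProjJoining A B z) (h0 : z 0 ∈ A) (hA : IsClosed A)
    (hB : IsClosed B) {l : E} (hl : Tendsto z atTop (𝓝 l)) : l ∈ A ∩ B :=
  ⟨hA.mem_of_tendsto (hl.comp (StrictMono.tendsto_atTop fun _ _ _ => by omega))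
      (Eventually.of_forall (h.mem_left h0)),
    hB.mem_of_tendsto (hl.comp (StrictMono.tendsto_atTop fun _ _ _ => by omega))
      (Eventually.of_forall h.mem_right)⟩

end IsAltProjJoining

end AlternatingProjections

theorem two_mul_add_two_mul_div_le {j n : ℕ} {c : ℝ} (hj : j < n) (hc : c < 1) :
    ((2 * j : ℕ) : ℝ) + (2 * n : ℕ) / (1 - c) ≤ 2 * (2 * n - 1 - c * (n - 1)) / (1 - c) := by
  have hjn : (j : ℝ) + 1 ≤ n := by exact_mod_cast hj
  have hsplit : 2 * (2 * n - 1 - c * (n - 1)) / (1 - c) = 2 * ((n : ℝ) - 1) + 2 * n / (1 - c) := by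
    field_simp [(sub_pos.2 hc).ne']
    ring
  rw [hsplit]
  push_cast
  linarith

theorem subtransversality_necessary_for_linear_extendibility_of_subsequences_general
    {E : Type*} [NormedAddCommGroup E] [InnerProductSpace ℝ E] [FiniteDimensional ℝ E]
    (Λ A B : Set E) (hΛ : IsClosed Λ) (hA : IsClosed A) (hB : IsClosed B)
    (xbar : E) (hxbar : xbar ∈ A ∩ B ∩ Λ)
    (n : ℕ) (c ρ : ℝ) (hc0 : 0 ≤ c) (hc1 : c < 1)
    (hyp : ∀ x b z : ℕ → E,
      (∀ k, b k ∈ projSet B (x k)) → (∀ k, x (k + 1) ∈ projSet A (b k)) →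
      (∀ k, z (2 * k) = x k) → (∀ k, z (2 * k + 1) = b k) →
      x 0 ∈ A ∩ Metric.ball xbar ρ ∩ Λ →
      ∃ j < n,
        (∀ k, z (2 * j + k) ∈ Λ) ∧
        (∀ k, ‖z (2 * j + k + 2) - z (2 * j + k + 1)‖ ≤ ‖z (2 * j + k + 1) - z (2 * j + k)‖) ∧
        (∀ k, ‖z (2 * j + 2 * n * (k + 1) + 1) - z (2 * j + 2 * n * (k + 1))‖ ≤
          c * ‖z (2 * j + 2 * n * k + 1) - z (2 * j + 2 * n * k)‖)) :
    ∀ x ∈ A ∩ Metric.ball xbar ρ ∩ Λ,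
      Metric.infDist x (A ∩ B ∩ Λ) ≤
        (2 * (2 * (n : ℝ) - 1 - c * ((n : ℝ) - 1)) / (1 - c)) * Metric.infDist x B := by
  intro x hx
  obtain ⟨z, rfl, hz⟩ := exists_isAltProjJoining hA hB ⟨xbar, hxbar.1.1⟩ ⟨xbar, hxbar.1.2⟩ x
  obtain ⟨j, hjn, hzΛ, -, hcontr⟩ := hyp (fun k => z (2 * k)) (fun k => z (2 * k + 1)) z
    (fun k => (hz k).1) (fun k => (hz k).2) (fun _ => rfl) (fun _ => rfl) hx
  have hlength := (hz.antitone_dist_succ hx.1.1).sum_range_le_of_periodic_contraction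
    (fun _ => dist_nonneg) hc0 hc1 (by omega : 0 < 2 * n)
    (fun k => by simpa only [dist_eq_norm'] using hcontr k)
  obtain ⟨l, hl, hdist⟩ := exists_tendsto_dist_le_of_sum_range_dist_le hlength
  have hlΛ : l ∈ Λ := hΛ.mem_of_tendsto (hl.comp (StrictMono.tendsto_atTop fun _ _ _ => by omega))
    (Eventually.of_forall hzΛ)
  have hstep : dist (z 0) (z 1) = infDist (z 0) B := by rw [dist_eq_norm]; exact (hz 0).1.2
  calc infDist (z 0) (A ∩ B ∩ Λ) ≤ dist (z 0) l :=
        infDist_le_dist_of_mem ⟨hz.mem_inter_of_tendsto hx.1.1 hA hB hl, hlΛ⟩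
    _ ≤ (((2 * j : ℕ) : ℝ) + (2 * n : ℕ) / (1 - c)) * infDist (z 0) B := hstep ▸ hdist
    _ ≤ _ := by gcongr; exacts [infDist_nonneg, two_mul_add_two_mul_div_le hjn hc1]

/-- If every alternating projections sequence for `(A,B)` starting in
`A ∩ B_ρ(xbar) ∩ Λ`, with joining sequence `(z_k)` (`z_{2k} = x_k`, `z_{2k+1} = b_k`), has a
shift index `j ∈ {0,…,n−1}` for which the shifted joining sequence stays in `Λ`, has
non-increasing consecutive gaps, and satisfies the `2n`-periodic linear decrease with rate
`c` (i.e. it is a linear extension of `(x_{j+nk})_k` on `Λ` with frequency `2n` and rate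
`c`), then `dist(x, A ∩ B ∩ Λ) ≤ κ·dist(x, B)` on `A ∩ B_ρ(xbar) ∩ Λ` with
`κ = 2(2n − 1 − c(n−1))/(1−c)`; in particular `{A,B}` is subtransversal at `xbar`
relative to `Λ`. -/
theorem subtransversality_necessary_for_linear_extendibility_of_subsequences
    {E : Type*} [NormedAddCommGroup E] [InnerProductSpace ℝ E] [FiniteDimensional ℝ E]
    (Λ A B : Set E) (hΛ : IsClosed Λ) (hA : IsClosed A) (hB : IsClosed B)
    (xbar : E) (hxbar : xbar ∈ A ∩ B ∩ Λ)
    (n : ℕ) (hn : 1 ≤ n) (c ρ : ℝ) (hc0 : 0 ≤ c) (hc1 : c < 1) (hρ : 0 < ρ)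
    (hyp : ∀ x b z : ℕ → E,
      (∀ k, b k ∈ projSet B (x k)) → (∀ k, x (k + 1) ∈ projSet A (b k)) →
      (∀ k, z (2 * k) = x k) → (∀ k, z (2 * k + 1) = b k) →
      x 0 ∈ A ∩ Metric.ball xbar ρ ∩ Λ →
      ∃ j < n,
        (∀ k, z (2 * j + k) ∈ Λ) ∧
        (∀ k, ‖z (2 * j + k + 2) - z (2 * j + k + 1)‖ ≤ ‖z (2 * j + k + 1) - z (2 * j + k)‖) ∧
        (∀ k, ‖z (2 * j + 2 * n * (k + 1) + 1) - z (2 * j + 2 * n * (k + 1))‖ ≤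
          c * ‖z (2 * j + 2 * n * k + 1) - z (2 * j + 2 * n * k)‖)) :
    ∀ x ∈ A ∩ Metric.ball xbar ρ ∩ Λ,
      Metric.infDist x (A ∩ B ∩ Λ) ≤
        (2 * (2 * (n : ℝ) - 1 - c * ((n : ℝ) - 1)) / (1 - c)) * Metric.infDist x B :=
  subtransversality_necessary_for_linear_extendibility_of_subsequences_general Λ A B hΛ hA hB xbar
    hxbar n c ρ hc0 hc1 hyp
end
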